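/- Assume the CSS code, the code-surgery datum, and that the pair (H_G, H_M) is (d_R, S)-bounded for a positive integer d_R. Then for every ψ ∈ F₂^{k−q}, the deformed-code error-wise distance satisfies d(H̄_X, J̄_X, ψ) ≥ min{ d(H_X, α_⊥ J_X, ψ), d_R }, where the minimum is taken in ℕ∞. -/

import Mathlib

open Matrix

/-- Error-wise distance `d(H, J, ψ) ∈ ℕ∞`: the infimum of the Hamming weight `|e|` over all
row vectors `e` with `H eᵀ = 0` and `J eᵀ = ψᵀ`; `⊤` if no such `e` exists. -/
noncomputable def ewDist {χ κ μ : Type*} [Fintype κ]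
    (H : Matrix χ κ (ZMod 2)) (J : Matrix μ κ (ZMod 2)) (ψ : μ → ZMod 2) : ℕ∞ :=
  sInf {w : ℕ∞ | ∃ e : κ → ZMod 2, H.mulVec e = 0 ∧ J.mulVec e = ψ ∧ w = (hammingNorm e : ℕ∞)}

/-- The pair `(H_G, H_M)` is `(d_R, S)`-bounded. -/
def BoundedPair {n rG rM nG : ℕ} (HG : Matrix (Fin rG) (Fin nG) (ZMod 2))
    (HM : Matrix (Fin rM) (Fin rG) (ZMod 2)) (S : Matrix (Fin nG) (Fin n) (ZMod 2))
    (dR : ℕ) : Prop :=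
  ∀ v : Fin rG → ZMod 2, HM.mulVec v = 0 → hammingNorm v < dR →
    ∃ u : Fin nG → ZMod 2, v = HG.mulVec u ∧
      hammingNorm (Matrix.vecMul u S) ≤ hammingNorm v

/-- Deformed-code X check matrix `H̄_X = [[H_X, T],[0, H_M]]`. -/
def HbarX {n rX rG rM : ℕ} (HX : Matrix (Fin rX) (Fin n) (ZMod 2))
    (T : Matrix (Fin rX) (Fin rG) (ZMod 2)) (HM : Matrix (Fin rM) (Fin rG) (ZMod 2)) :
    Matrix (Fin rX ⊕ Fin rM) (Fin n ⊕ Fin rG) (ZMod 2) :=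
  Matrix.fromBlocks HX T 0 HM

/-- Deformed-code Z check matrix `H̄_Z = [[H_Z, 0],[S, H_Gᵀ]]`. -/
def HbarZ {n rZ rG nG : ℕ} (HZ : Matrix (Fin rZ) (Fin n) (ZMod 2))
    (S : Matrix (Fin nG) (Fin n) (ZMod 2)) (HG : Matrix (Fin rG) (Fin nG) (ZMod 2)) :
    Matrix (Fin rZ ⊕ Fin nG) (Fin n ⊕ Fin rG) (ZMod 2) :=
  Matrix.fromBlocks HZ 0 S HGᵀ

/-- Deformed-code X generator matrix `J̄_X = (α_⊥ J_X  β)`. -/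
def JbarX {n k q rG : ℕ} (JX : Matrix (Fin k) (Fin n) (ZMod 2))
    (αperp : Matrix (Fin (k - q)) (Fin k) (ZMod 2))
    (β : Matrix (Fin (k - q)) (Fin rG) (ZMod 2)) :
    Matrix (Fin (k - q)) (Fin n ⊕ Fin rG) (ZMod 2) :=
  Matrix.fromCols (αperp * JX) β

/-- Deformed-code Z generator matrix `J̄_Z = ((α_⊥ʳ)ᵀ J_Z  0)`. -/
def JbarZ {n k q rG : ℕ} (JZ : Matrix (Fin k) (Fin n) (ZMod 2))
    (αperpR : Matrix (Fin k) (Fin (k - q)) (ZMod 2)) :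
    Matrix (Fin (k - q)) (Fin n ⊕ Fin rG) (ZMod 2) :=
  Matrix.fromCols (αperpRᵀ * JZ) (0 : Matrix (Fin (k - q)) (Fin rG) (ZMod 2))

/-- Repetition-code check matrix `H_m ∈ F₂^{(m−1)×m}`, `(H_m)_{i,j} = 1` iff `j ∈ {i, i+1}`
(1-based); in 0-based indexing: `j = i` or `j = i+1`. -/
def repH (m : ℕ) : Matrix (Fin (m - 1)) (Fin m) (ZMod 2) :=
  Matrix.of fun i j => if (j : ℕ) = (i : ℕ) ∨ (j : ℕ) = (i : ℕ) + 1 then 1 else 0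

/-- The matrix `(E_p  0) ∈ F₂^{p×m}` selecting the first `p` coordinates. -/
def projFirst (p m : ℕ) : Matrix (Fin p) (Fin m) (ZMod 2) :=
  Matrix.of fun i j => if (j : ℕ) = (i : ℕ) then 1 else 0

/-- Hamming weight of a matrix (number of nonzero entries). -/
def matWeight {ι κ : Type*} [Fintype ι] [Fintype κ] (M : Matrix ι κ (ZMod 2)) : ℕ :=
  hammingNorm (Function.uncurry M)

/-- Spacetime X check matrix
`H^{st}_X = [[H̄_X, 0, 0, E_{d_T;1}⊗E], [0, E_{d_T−1}⊗H̄_X, 0, H_{d_T}⊗E], [0, 0, H̄_X, E_{d_T;d_T}⊗E]]`,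
built from the deformed check matrix `H̄_X` (here `E = E_{r_X+r_M}`).  Rounds are 0-based:
round index `s : Fin d_T`, with `s = 0` the first round and `s = d_T − 1` the last. -/
def HstX {n rX rG rM : ℕ} (dT : ℕ)
    (HbX : Matrix (Fin rX ⊕ Fin rM) (Fin n ⊕ Fin rG) (ZMod 2)) :
    Matrix ((Fin rX ⊕ Fin rM) ⊕ (Fin (dT - 1) × (Fin rX ⊕ Fin rM)) ⊕ (Fin rX ⊕ Fin rM))
      ((Fin n ⊕ Fin rG) ⊕ (Fin (dT - 1) × (Fin n ⊕ Fin rG)) ⊕ (Fin n ⊕ Fin rG) ⊕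
        (Fin dT × (Fin rX ⊕ Fin rM))) (ZMod 2) :=
  Matrix.of fun i j =>
    match i, j with
    | Sum.inl c, Sum.inl qq => HbX c qq
    | Sum.inl c, Sum.inr (Sum.inr (Sum.inr (s, c'))) =>
        if (s : ℕ) = 0 ∧ c' = c then 1 else 0
    | Sum.inr (Sum.inl (t, c)), Sum.inr (Sum.inl (t', qq)) =>
        if t' = t then HbX c qq else 0
    | Sum.inr (Sum.inl (t, c)), Sum.inr (Sum.inr (Sum.inr (s, c'))) =>
        if ((s : ℕ) = (t : ℕ) ∨ (s : ℕ) = (t : ℕ) + 1) ∧ c' = c then 1 else 0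
    | Sum.inr (Sum.inr c), Sum.inr (Sum.inr (Sum.inl qq)) => HbX c qq
    | Sum.inr (Sum.inr c), Sum.inr (Sum.inr (Sum.inr (s, c'))) =>
        if (s : ℕ) = dT - 1 ∧ c' = c then 1 else 0
    | _, _ => 0

/-- Spacetime Z check matrix
`H^{st}_Z = [[H_Z, 0, 0, E_{d_T;1}⊗γ₁], [0, E_{d_T−1}⊗H̄_Z, 0, H_{d_T}⊗E], [0, 0, H_Z, E_{d_T;d_T}⊗γ₁]]`,
built from `H_Z` and the deformed check matrix `H̄_Z` (here `E = E_{r_Z+n_G}` and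
`γ₁ = (E_{r_Z}  0)`). -/
def HstZ {n rZ rG nG : ℕ} (dT : ℕ) (HZ : Matrix (Fin rZ) (Fin n) (ZMod 2))
    (HbZ : Matrix (Fin rZ ⊕ Fin nG) (Fin n ⊕ Fin rG) (ZMod 2)) :
    Matrix (Fin rZ ⊕ (Fin (dT - 1) × (Fin rZ ⊕ Fin nG)) ⊕ Fin rZ)
      (Fin n ⊕ (Fin (dT - 1) × (Fin n ⊕ Fin rG)) ⊕ Fin n ⊕
        (Fin dT × (Fin rZ ⊕ Fin nG))) (ZMod 2) :=
  Matrix.of fun i j =>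
    match i, j with
    | Sum.inl z, Sum.inl a => HZ z a
    | Sum.inl z, Sum.inr (Sum.inr (Sum.inr (s, w))) =>
        if (s : ℕ) = 0 ∧ w = Sum.inl z then 1 else 0
    | Sum.inr (Sum.inl (t, w)), Sum.inr (Sum.inl (t', qq)) =>
        if t' = t then HbZ w qq else 0
    | Sum.inr (Sum.inl (t, w)), Sum.inr (Sum.inr (Sum.inr (s, w'))) =>
        if ((s : ℕ) = (t : ℕ) ∨ (s : ℕ) = (t : ℕ) + 1) ∧ w' = w then 1 else 0
    | Sum.inr (Sum.inr z), Sum.inr (Sum.inr (Sum.inl a)) => HZ z a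
    | Sum.inr (Sum.inr z), Sum.inr (Sum.inr (Sum.inr (s, w))) =>
        if (s : ℕ) = dT - 1 ∧ w = Sum.inl z then 1 else 0
    | _, _ => 0

/-- Spacetime X generator matrix `J^{st}_X = (J̄_X, 1_{d_T−1}⊗J̄_X, J̄_X, 0)`. -/
def JstX {n k q rX rG rM : ℕ} (dT : ℕ)
    (JbX : Matrix (Fin (k - q)) (Fin n ⊕ Fin rG) (ZMod 2)) :
    Matrix (Fin (k - q))
      ((Fin n ⊕ Fin rG) ⊕ (Fin (dT - 1) × (Fin n ⊕ Fin rG)) ⊕ (Fin n ⊕ Fin rG) ⊕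
        (Fin dT × (Fin rX ⊕ Fin rM))) (ZMod 2) :=
  Matrix.of fun i j =>
    match j with
    | Sum.inl qq => JbX i qq
    | Sum.inr (Sum.inl (_, qq)) => JbX i qq
    | Sum.inr (Sum.inr (Sum.inl qq)) => JbX i qq
    | Sum.inr (Sum.inr (Sum.inr _)) => 0

/-- Spacetime Z generator matrix `J^{st}_Z = ((α_⊥ʳ)ᵀJ_Z, 1_{d_T−1}⊗J̄_Z, (α_⊥ʳ)ᵀJ_Z, 0)`,
given `JZ' = (α_⊥ʳ)ᵀ J_Z` and `J̄_Z`. -/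
def JstZ {n k q rZ rG nG : ℕ} (dT : ℕ)
    (JZ' : Matrix (Fin (k - q)) (Fin n) (ZMod 2))
    (JbZ : Matrix (Fin (k - q)) (Fin n ⊕ Fin rG) (ZMod 2)) :
    Matrix (Fin (k - q))
      (Fin n ⊕ (Fin (dT - 1) × (Fin n ⊕ Fin rG)) ⊕ Fin n ⊕
        (Fin dT × (Fin rZ ⊕ Fin nG))) (ZMod 2) :=
  Matrix.of fun i j =>
    match j with
    | Sum.inl a => JZ' i a
    | Sum.inr (Sum.inl (_, qq)) => JbZ i qq
    | Sum.inr (Sum.inr (Sum.inl a)) => JZ' i a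
    | Sum.inr (Sum.inr (Sum.inr _)) => 0

/-- Spacetime generator matrix for measured Z logical operators
`J^{st}_{mz} = (αJ_Z, 1_{d_T−1}⊗(αJ_Z η), αJ_Z, 0)`, given `M = α J_Z`
(note `α J_Z η = (α J_Z  0)`). -/
def JstMZ {n q rZ rG nG : ℕ} (dT : ℕ) (M : Matrix (Fin q) (Fin n) (ZMod 2)) :
    Matrix (Fin q)
      (Fin n ⊕ (Fin (dT - 1) × (Fin n ⊕ Fin rG)) ⊕ Fin n ⊕
        (Fin dT × (Fin rZ ⊕ Fin nG))) (ZMod 2) :=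
  Matrix.of fun i j =>
    match j with
    | Sum.inl a => M i a
    | Sum.inr (Sum.inl (_, Sum.inl a)) => M i a
    | Sum.inr (Sum.inl (_, Sum.inr _)) => 0
    | Sum.inr (Sum.inr (Sum.inl a)) => M i a
    | Sum.inr (Sum.inr (Sum.inr _)) => 0

/-- Spacetime generator matrix for measurement outcomes
`J^{st}_{oc} = (αJ_Z, 0, 0, E_{d_T;1}⊗(αJ_Z R γ₂))`, given `M = α J_Z` and `N = α J_Z R`
(note `α J_Z R γ₂ = (0  α J_Z R)`). -/
def JstOC {n q rZ rG nG : ℕ} (dT : ℕ) (M : Matrix (Fin q) (Fin n) (ZMod 2))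
    (N : Matrix (Fin q) (Fin nG) (ZMod 2)) :
    Matrix (Fin q)
      (Fin n ⊕ (Fin (dT - 1) × (Fin n ⊕ Fin rG)) ⊕ Fin n ⊕
        (Fin dT × (Fin rZ ⊕ Fin nG))) (ZMod 2) :=
  Matrix.of fun i j =>
    match j with
    | Sum.inl a => M i a
    | Sum.inr (Sum.inl _) => 0
    | Sum.inr (Sum.inr (Sum.inl _)) => 0
    | Sum.inr (Sum.inr (Sum.inr (_, Sum.inl _))) => 0
    | Sum.inr (Sum.inr (Sum.inr (s, Sum.inr g))) => if (s : ℕ) = 0 then N i g else 0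


private lemma hn_elim {ι κ : Type*} [Fintype ι] [Fintype κ] (x : ι → ZMod 2) (y : κ → ZMod 2) :
    hammingNorm (Sum.elim x y) = hammingNorm x + hammingNorm y := by
  simp [hammingNorm, hammingDist, Finset.card_filter, Fintype.sum_sum_type]
  convert rfl using 3 <;> split_ifs <;> simp_all

private lemma hn_add_le {ι : Type*} [Fintype ι] (x y : ι → ZMod 2) :
    hammingNorm (x + y) ≤ hammingNorm x + hammingNorm y := by
  calc hammingNorm (x + y) = hammingDist (x + y) 0 := (hammingDist_zero_right _).symm
    _ ≤ hammingDist (x + y) y + hammingDist y 0 := hammingDist_triangle _ _ _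
    _ = hammingNorm x + hammingNorm y := by
        rw [hammingDist_zero_right, hammingDist_eq_hammingNorm,
          show -(x + y) + y = x by rw [show -(x + y) + y = -x by abel]; funext i; exact ZMod.neg_eq_self_mod_two _]

/-- deformed-code error-wise distance bound for Z logical errors:
`d(H̄_X, J̄_X, ψ) ≥ min{ d(H_X, α_⊥ J_X, ψ), d_R }`. -/
theorem deformed_X_ewDist_lower_bound
    {n k q rX rZ rG rM nG : ℕ}
    (HX : Matrix (Fin rX) (Fin n) (ZMod 2)) (HZ : Matrix (Fin rZ) (Fin n) (ZMod 2))
    (JX JZ : Matrix (Fin k) (Fin n) (ZMod 2))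
    (hHXHZ : HX * HZᵀ = 0) (hHXJZ : HX * JZᵀ = 0) (hHZJX : HZ * JXᵀ = 0)
    (hJXJZ : JX * JZᵀ = 1)
    (hq1 : 1 ≤ q) (hqk : q ≤ k)
    (α : Matrix (Fin q) (Fin k) (ZMod 2))
    (αperp : Matrix (Fin (k - q)) (Fin k) (ZMod 2)) (hperp : αperp * αᵀ = 0)
    (αperpR : Matrix (Fin k) (Fin (k - q)) (ZMod 2)) (hrinv : αperp * αperpR = 1)
    (S : Matrix (Fin nG) (Fin n) (ZMod 2)) (T : Matrix (Fin rX) (Fin rG) (ZMod 2))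
    (HG : Matrix (Fin rG) (Fin nG) (ZMod 2)) (HM : Matrix (Fin rM) (Fin rG) (ZMod 2))
    (R : Matrix (Fin n) (Fin nG) (ZMod 2)) (β : Matrix (Fin (k - q)) (Fin rG) (ZMod 2))
    (hs1 : HX * Sᵀ = T * HG) (hs2 : HM * HG = 0)
    (hs3a : α * JZ * R * S = α * JZ) (hs3b : HG * (α * JZ * R)ᵀ = 0)
    (hs4 : αperp * JX * Sᵀ = β * HG)
    (dR : ℕ) (hdRpos : 0 < dR) (hbound : BoundedPair HG HM S dR) :
    ∀ ψ : Fin (k - q) → ZMod 2,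
      min (ewDist HX (αperp * JX) ψ) (dR : ℕ∞) ≤
        ewDist (HbarX HX T HM) (JbarX JX αperp β) ψ := by
  intro ψ
  apply le_sInf
  rintro w ⟨ebar, h1, h2, rfl⟩
  set e : Fin n → ZMod 2 := ebar ∘ Sum.inl with he
  set u : Fin rG → ZMod 2 := ebar ∘ Sum.inr with hu
  have hsplit : ebar = Sum.elim e u := by funext j; cases j <;> rfl
  have hw : hammingNorm ebar = hammingNorm e + hammingNorm u := by
    rw [hsplit]; exact hn_elim e u
  rw [hsplit] at h1 h2
  rw [HbarX, Matrix.fromBlocks_mulVec] at h1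
  have h1a : HX.mulVec e + T.mulVec u = 0 := by
    have := congrFun h1 ; exact funext fun i => by simpa using congrFun h1 (Sum.inl i)
  have h1b : HM.mulVec u = 0 := by
    funext i
    have := congrFun h1 (Sum.inr i)
    simpa [Matrix.zero_mulVec] using this
  rw [JbarX, Matrix.fromCols_mulVec_sumElim] at h2
  by_cases hcase : hammingNorm u < dR
  · obtain ⟨us, husv, husw⟩ := hbound u h1b hcase
    set e' : Fin n → ZMod 2 := e + Matrix.vecMul us S with he'
    have hS : Matrix.vecMul us S = Sᵀ.mulVec us := (Matrix.mulVec_transpose S us).symm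
    have hHXe' : HX.mulVec e' = 0 := by
      rw [he', Matrix.mulVec_add, hS, Matrix.mulVec_mulVec, hs1,
        ← Matrix.mulVec_mulVec, ← husv]
      exact h1a
    have hJe' : (αperp * JX).mulVec e' = ψ := by
      rw [he', Matrix.mulVec_add, hS, Matrix.mulVec_mulVec, hs4,
        ← Matrix.mulVec_mulVec us β HG, ← husv]
      exact h2
    have hle : ewDist HX (αperp * JX) ψ ≤ (hammingNorm e' : ℕ∞) :=
      sInf_le ⟨e', hHXe', hJe', rfl⟩
    have hle2 : hammingNorm e' ≤ hammingNorm ebar := by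
      rw [hw, he']
      exact le_trans (hn_add_le _ _) (Nat.add_le_add le_rfl husw)
    exact le_trans (min_le_left _ _) (le_trans hle (by exact_mod_cast hle2))
  · push_neg at hcase
    refine le_trans (min_le_right _ _) ?_
    rw [hw]
    exact_mod_cast le_trans hcase (Nat.le_add_left _ _)
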